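/- Assume α ∈ (0,2), β₁ < α, 2β₁ ≤ d + α, and that ∂D satisfies the Aikawa condition with exponent q' for some q' ∈ (β₁, d]. Let λ ∈ [0, d − β₁). Then there exists C > 0 such that for all t > 0 and ρ with t^{1/α} < ρ < diam(D), all x ∈ closure(D) and all w ∈ D, ∫_{D ∖ B(w,ρ)} t^{−d/α} (min(1, t^{1/α}/|x−z|))^λ J(w,z) dz ≤ C t^{(λ−d)/α} ρ^{−λ−α} Φ((ρ ∧ A₀)/(δ_D(w) ∧ A₀)). -/

import Mathlib

open MeasureTheory Metric Set ENNReal Filter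

noncomputable def deltaD {d : ℕ} (D : Set (EuclideanSpace ℝ (Fin d)))
    (x : EuclideanSpace ℝ (Fin d)) : ℝ :=
  Metric.infDist x (frontier D)

def Aikawa {d : ℕ} (D : Set (EuclideanSpace ℝ (Fin d))) (q : ℝ) : Prop :=
  ∃ C₀ : ℝ, 1 ≤ C₀ ∧ ∀ x ∈ frontier D, ∀ r s : ℝ, 0 < s → s ≤ r →
    ENNReal.ofReal r < EMetric.diam (frontier D) →
    MeasureTheory.volume {y : EuclideanSpace ℝ (Fin d) |
        y ∈ Metric.ball x r ∧ Metric.infDist y (frontier D) < s} ≤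
      ENNReal.ofReal (C₀ * (s / r) ^ q) * MeasureTheory.volume (Metric.ball x r)

noncomputable def truncMin (A : ℝ≥0∞) (r : ℝ) : ℝ := (min (ENNReal.ofReal r) A).toReal

/-! ### Generic helpers -/

lemma tsum_ofReal_geometric_le (c q : ℝ) (hc : 0 ≤ c) (hq0 : 0 ≤ q) (hq1 : q < 1) :
    (∑' n : ℕ, ENNReal.ofReal (c * q ^ n)) ≤ ENNReal.ofReal (c * (1 - q)⁻¹) := by
  have h1 : ∀ n : ℕ, ENNReal.ofReal (c * q ^ n) = ENNReal.ofReal c * (ENNReal.ofReal q) ^ n := by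
    intro n
    rw [ENNReal.ofReal_mul hc, ENNReal.ofReal_pow hq0]
  calc (∑' n : ℕ, ENNReal.ofReal (c * q ^ n))
      = ENNReal.ofReal c * ∑' n : ℕ, (ENNReal.ofReal q) ^ n := by
        simp_rw [h1]; exact ENNReal.tsum_mul_left
    _ = ENNReal.ofReal c * (1 - ENNReal.ofReal q)⁻¹ := by rw [ENNReal.tsum_geometric]
    _ ≤ ENNReal.ofReal (c * (1 - q)⁻¹) := le_of_eq (by
        rw [ENNReal.ofReal_mul hc, ← ENNReal.ofReal_one,
          ← ENNReal.ofReal_sub 1 hq0, ENNReal.ofReal_inv_of_pos (by linarith)])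

lemma exists_dyadic {x r : ℝ} (hx : 0 < x) (hxr : x < r) :
    ∃ k : ℕ, (1/2 : ℝ) ^ (k+1) * r ≤ x ∧ x < (1/2 : ℝ) ^ k * r := by
  classical
  have hr : 0 < r := lt_trans hx hxr
  have hP0 : x < (1/2:ℝ) ^ 0 * r := by simpa using hxr
  have hex : ∃ n : ℕ, ¬ x < (1/2:ℝ) ^ n * r := by
    obtain ⟨n, hn⟩ := exists_pow_lt_of_lt_one (div_pos hx hr) (by norm_num : (1/2:ℝ) < 1)
    refine ⟨n, not_lt.mpr ?_⟩
    have h2 : (1/2:ℝ)^n * r < x := by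
      rw [← lt_div_iff₀ hr] at *
      exact hn
    linarith
  have hm := Nat.find_spec hex
  have hm0 : Nat.find hex ≠ 0 := by
    intro h; rw [h] at hm; exact hm hP0
  obtain ⟨k, hk⟩ := Nat.exists_eq_succ_of_ne_zero hm0
  rw [hk] at hm
  exact ⟨k, not_lt.mp hm, not_not.mp (Nat.find_min hex (by omega))⟩

lemma pow_rpow_comm {x : ℝ} (hx : 0 ≤ x) (c : ℝ) (n : ℕ) : (x ^ n) ^ c = (x ^ c) ^ n := by
  rw [← Real.rpow_natCast x n, ← Real.rpow_mul hx, mul_comm, Real.rpow_mul hx,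
    Real.rpow_natCast]

lemma max_one_mul_le {x y : ℝ} (hx : 0 ≤ x) (hy : 0 ≤ y) :
    max (x*y) 1 ≤ max x 1 * max y 1 := by
  have h1 : (1:ℝ) ≤ max x 1 := le_max_right _ _
  have h2 : (1:ℝ) ≤ max y 1 := le_max_right _ _
  apply max_le
  · exact mul_le_mul (le_max_left _ _) (le_max_left _ _) hy (by linarith)
  · nlinarith

lemma max_one_scale {c a : ℝ} (hc : 1 ≤ c) : max 1 (c*a) ≤ c * max 1 a := by
  have h1 : (1:ℝ) ≤ max 1 a := le_max_left _ _
  apply max_le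
  · nlinarith
  · exact mul_le_mul_of_nonneg_left (le_max_right 1 a) (by linarith)

/-! ### truncMin lemmas -/

lemma truncMin_nonneg (A : ℝ≥0∞) (r : ℝ) : 0 ≤ truncMin A r := ENNReal.toReal_nonneg

lemma truncMin_pos {A : ℝ≥0∞} (hA : 0 < A) {r : ℝ} (hr : 0 < r) : 0 < truncMin A r := by
  apply ENNReal.toReal_pos
  · exact (lt_min (ENNReal.ofReal_pos.mpr hr) hA).ne'
  · exact (lt_of_le_of_lt (min_le_left _ _) ENNReal.ofReal_lt_top).ne

lemma truncMin_mono (A : ℝ≥0∞) {r s : ℝ} (h : r ≤ s) : truncMin A r ≤ truncMin A s :=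
  ENNReal.toReal_mono (lt_of_le_of_lt (min_le_left _ _) ENNReal.ofReal_lt_top).ne
    (min_le_min (ENNReal.ofReal_le_ofReal h) le_rfl)

lemma truncMin_le (A : ℝ≥0∞) {r : ℝ} (hr : 0 ≤ r) : truncMin A r ≤ r := by
  calc (min (ENNReal.ofReal r) A).toReal
      ≤ (ENNReal.ofReal r).toReal :=
        ENNReal.toReal_mono ENNReal.ofReal_ne_top (min_le_left _ _)
    _ = r := ENNReal.toReal_ofReal hr

lemma truncMin_ratio_le {A : ℝ≥0∞} (hA : 0 < A) {r₁ r₂ : ℝ} (h1 : 0 < r₁) (h12 : r₁ ≤ r₂) :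
    truncMin A r₂ / truncMin A r₁ ≤ r₂ / r₁ := by
  rw [div_le_div_iff₀ (truncMin_pos hA h1) h1]
  by_cases hAt : A = ⊤
  · subst hAt
    have e : ∀ {r : ℝ}, 0 ≤ r → truncMin ⊤ r = r := by
      intro r hr
      unfold truncMin
      rw [min_eq_left le_top, ENNReal.toReal_ofReal hr]
    rw [e h1.le, e (h1.trans_le h12).le, mul_comm]
  · have e : ∀ {r : ℝ}, 0 ≤ r → truncMin A r = min r A.toReal := by
      intro r hr
      unfold truncMin
      rw [ENNReal.toReal_min ENNReal.ofReal_ne_top hAt, ENNReal.toReal_ofReal hr]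
    rw [e h1.le, e (h1.trans_le h12).le]
    rcases le_or_gt A.toReal r₁ with h | h
    · rw [min_eq_right h, min_eq_right (h.trans h12)]
      have h0 : 0 ≤ A.toReal := ENNReal.toReal_nonneg
      nlinarith
    · rw [min_eq_left h.le]
      exact mul_le_mul_of_nonneg_right (min_le_left _ _) h1.le

/-! ### Φ lemma -/

lemma Phi_mul_le {Φ : ℝ → ℝ} {C_Φ β₁ : ℝ} (hβ₁ : 0 ≤ β₁) (hC : 1 ≤ C_Φ)
    (hΦ1 : ∀ r : ℝ, 0 ≤ r → 1 ≤ Φ r) (hmono : MonotoneOn Φ (Set.Ici 0))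
    (hscale : ∀ s r : ℝ, 0 < s → s ≤ r → Φ r ≤ C_Φ * (r/s)^β₁ * Φ s)
    {a b : ℝ} (ha : 0 ≤ a) (hb : 0 < b) :
    Φ (a*b) ≤ C_Φ * (max a 1) ^ β₁ * Φ b := by
  rcases le_or_gt a 1 with h1 | h1
  · have hab : a * b ≤ b := by nlinarith
    have hΦab : Φ (a*b) ≤ Φ b := hmono (mul_nonneg ha hb.le) hb.le hab
    have hΦb : 1 ≤ Φ b := hΦ1 b hb.le
    rw [max_eq_right h1, Real.one_rpow, mul_one]
    nlinarith
  · have h := hscale b (a*b) hb (by nlinarith)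
    rw [mul_div_assoc, div_self hb.ne', mul_one] at h
    rwa [max_eq_left h1.le]

/-! ### Volume of balls -/

lemma volume_ball_eq {d : ℕ} (hd : 1 ≤ d) (p : EuclideanSpace ℝ (Fin d)) {r : ℝ} (hr : 0 < r) :
    volume (ball p r) =
      ENNReal.ofReal ((volume (ball (0 : EuclideanSpace ℝ (Fin d)) 1)).toReal * r ^ (d:ℝ)) := by
  have hnt : Nontrivial (EuclideanSpace ℝ (Fin d)) := by
    apply Module.nontrivial_of_finrank_pos (R := ℝ)
    rw [finrank_euclideanSpace_fin]; omega
  rw [Measure.addHaar_ball volume p hr.le, finrank_euclideanSpace_fin,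
    ENNReal.ofReal_mul ENNReal.toReal_nonneg, ENNReal.ofReal_toReal measure_ball_lt_top.ne,
    ← Real.rpow_natCast r d]
  ring

/-! ### Covering lemma: global bound on the measure of small neighborhoods of the boundary -/

lemma aux_cover {d : ℕ} (hd : 1 ≤ d) (D : Set (EuclideanSpace ℝ (Fin d)))
    (hfr : (frontier D).Nonempty) {q' : ℝ} (hq'0 : 0 < q') (hAik : Aikawa D q') :
    ∃ K : ℝ, 1 ≤ K ∧ ∀ s : ℝ, 0 < s →
      ENNReal.ofReal (16*s) < EMetric.diam (frontier D) →
      EMetric.diam (frontier D) ≠ ⊤ →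
      volume {z : EuclideanSpace ℝ (Fin d) | Metric.infDist z (frontier D) < s} ≤
        ENNReal.ofReal (K * s ^ q') := by
  classical
  obtain ⟨C₀, hC₀, hA⟩ := hAik
  by_cases hdt : EMetric.diam (frontier D) = ⊤
  · exact ⟨1, le_rfl, fun s _ _ h => absurd hdt h⟩
  set ν : ℝ := (volume (ball (0 : EuclideanSpace ℝ (Fin d)) 1)).toReal with hνdef
  have hν0 : 0 ≤ ν := ENNReal.toReal_nonneg
  set ℓ : ℝ := (EMetric.diam (frontier D)).toReal with hℓdef
  have hdiam : EMetric.diam (frontier D) = ENNReal.ofReal ℓ := (ENNReal.ofReal_toReal hdt).symm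
  by_cases hℓ0 : ℓ ≤ 0
  · refine ⟨1, le_rfl, fun s hs h16 _ => absurd h16 ?_⟩
    rw [hdiam]
    simp only [not_lt]
    exact ENNReal.ofReal_le_ofReal (by linarith)
  push_neg at hℓ0
  have hFb : Bornology.IsBounded (frontier D) := Metric.isBounded_iff_ediam_ne_top.mpr hdt
  have hFc : IsCompact (frontier D) :=
    Metric.isCompact_of_isClosed_isBounded isClosed_frontier hFb
  obtain ⟨b', hb'F, hb'fin, hb'cov⟩ :=
    hFc.elim_finite_subcover_image
      (ι := EuclideanSpace ℝ (Fin d)) (c := fun x => ball x (ℓ/16))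
      (fun x _ => isOpen_ball)
      (fun x hx => Set.mem_biUnion hx (mem_ball_self (by positivity)))
  set t : Finset (EuclideanSpace ℝ (Fin d)) := hb'fin.toFinset with htdef
  have hl8 : (0:ℝ) < ℓ/8 := by linarith
  have hrp : (0:ℝ) < (ℓ/8) ^ q' := Real.rpow_pos_of_pos hl8 _
  set κ : ℝ := C₀ * (ν * (ℓ/8) ^ (d:ℝ)) / (ℓ/8) ^ q' with hκdef
  have hκ0 : 0 ≤ κ := by
    apply div_nonneg _ hrp.le
    exact mul_nonneg (by linarith) (by positivity)
  refine ⟨1 + t.card * κ, by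
    have := mul_nonneg (Nat.cast_nonneg (α := ℝ) t.card) hκ0
    linarith, ?_⟩
  intro s hs h16 _
  have h16' : 16 * s < ℓ := by
    rw [hdiam] at h16
    exact (ENNReal.ofReal_lt_ofReal_iff hℓ0).mp h16
  have hsub : {z : EuclideanSpace ℝ (Fin d) | Metric.infDist z (frontier D) < s} ⊆
      ⋃ x ∈ t, {z : EuclideanSpace ℝ (Fin d) |
        z ∈ ball x (ℓ/8) ∧ Metric.infDist z (frontier D) < s} := by
    intro z hz
    obtain ⟨y, hyF, hyd⟩ := (Metric.infDist_lt_iff hfr).mp hz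
    obtain ⟨x, hxb, hyx⟩ := Set.mem_iUnion₂.mp (hb'cov hyF)
    refine Set.mem_biUnion (hb'fin.mem_toFinset.mpr hxb) ⟨?_, hz⟩
    rw [mem_ball] at hyx ⊢
    have h3 := dist_triangle z y x
    have hds : dist z y < s := hyd
    linarith
  calc volume {z : EuclideanSpace ℝ (Fin d) | Metric.infDist z (frontier D) < s}
      ≤ volume (⋃ x ∈ t, {z : EuclideanSpace ℝ (Fin d) |
          z ∈ ball x (ℓ/8) ∧ Metric.infDist z (frontier D) < s}) := measure_mono hsub
    _ ≤ ∑ x ∈ t, volume {z : EuclideanSpace ℝ (Fin d) |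
          z ∈ ball x (ℓ/8) ∧ Metric.infDist z (frontier D) < s} :=
        measure_biUnion_finset_le t _
    _ ≤ ∑ _x ∈ t, ENNReal.ofReal (κ * s ^ q') := by
        apply Finset.sum_le_sum
        intro x hxt
        have hxF : x ∈ frontier D := hb'F (hb'fin.mem_toFinset.mp hxt)
        have hb := hA x hxF (ℓ/8) s hs (by linarith)
          (by rw [hdiam]; exact (ENNReal.ofReal_lt_ofReal_iff hℓ0).mpr (by linarith))
        calc volume {z : EuclideanSpace ℝ (Fin d) |
              z ∈ ball x (ℓ/8) ∧ Metric.infDist z (frontier D) < s}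
            ≤ ENNReal.ofReal (C₀ * (s / (ℓ/8)) ^ q') * volume (ball x (ℓ/8)) := hb
          _ = ENNReal.ofReal (C₀ * (s / (ℓ/8)) ^ q' * (ν * (ℓ/8) ^ (d:ℝ))) := by
              rw [volume_ball_eq hd x hl8, ← ENNReal.ofReal_mul (by positivity)]
          _ ≤ ENNReal.ofReal (κ * s ^ q') := by
              apply ENNReal.ofReal_le_ofReal
              apply le_of_eq
              rw [Real.div_rpow hs.le hl8.le, hκdef]
              field_simp
    _ = t.card • ENNReal.ofReal (κ * s ^ q') := by rw [Finset.sum_const]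
    _ ≤ ENNReal.ofReal ((1 + t.card * κ) * s ^ q') := by
        rw [nsmul_eq_mul, ← ENNReal.ofReal_natCast t.card,
          ← ENNReal.ofReal_mul (Nat.cast_nonneg t.card)]
        apply ENNReal.ofReal_le_ofReal
        have hsq : (0:ℝ) ≤ s ^ q' := by positivity
        nlinarith [mul_nonneg (mul_nonneg (Nat.cast_nonneg t.card) hκ0) hsq]

/-! ### L0: layered volume bound at every scale -/

lemma aux0 {d : ℕ} (hd : 1 ≤ d) (D : Set (EuclideanSpace ℝ (Fin d)))
    (hfr : (frontier D).Nonempty) {q' : ℝ} (hq'0 : 0 < q') (hq'd : q' ≤ (d:ℝ))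
    (hAik : Aikawa D q') :
    ∃ C_A : ℝ, 1 ≤ C_A ∧ ∀ (p : EuclideanSpace ℝ (Fin d)) (r s : ℝ), 0 < r → 0 < s →
      volume {z : EuclideanSpace ℝ (Fin d) |
          z ∈ ball p r ∧ Metric.infDist z (frontier D) < s} ≤
        ENNReal.ofReal (C_A * (min (s/r) 1) ^ q' * r ^ (d:ℝ)) := by
  classical
  obtain ⟨K, hK1, hKs⟩ := aux_cover hd D hfr hq'0 hAik
  obtain ⟨C₀, hC₀, hA⟩ := hAik
  set ν : ℝ := (volume (ball (0 : EuclideanSpace ℝ (Fin d)) 1)).toReal with hνdef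
  have hν0 : 0 ≤ ν := ENNReal.toReal_nonneg
  set ℓ : ℝ := (EMetric.diam (frontier D)).toReal with hℓdef
  have hℓ0 : 0 ≤ ℓ := ENNReal.toReal_nonneg
  set c₁ : ℝ := C₀ * (ν * (4:ℝ) ^ (d:ℝ)) with hc₁
  set c₂ : ℝ := (17:ℝ) ^ (d:ℝ) * ν with hc₂
  set c₃ : ℝ := K * max 1 ((ℓ/4) ^ (q' - (d:ℝ))) with hc₃
  have hc₁0 : 0 ≤ c₁ := mul_nonneg (by linarith) (by positivity)
  have hc₂0 : 0 ≤ c₂ := by positivity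
  have hc₃0 : 0 ≤ c₃ :=
    mul_nonneg (by linarith) (le_trans zero_le_one (le_max_left _ _))
  refine ⟨ν + c₁ + c₂ + c₃ + 1, by linarith, ?_⟩
  intro p r s hr hs
  have hXnn : (0:ℝ) ≤ (min (s/r) 1) ^ q' * r ^ (d:ℝ) := by
    apply mul_nonneg _ (by positivity)
    apply Real.rpow_nonneg
    exact le_min (by positivity) zero_le_one
  have hfinal : ∀ c : ℝ, 0 ≤ c → c ≤ ν + c₁ + c₂ + c₃ + 1 →
      ENNReal.ofReal (c * ((min (s/r) 1) ^ q' * r ^ (d:ℝ))) ≤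
      ENNReal.ofReal ((ν + c₁ + c₂ + c₃ + 1) * (min (s/r) 1) ^ q' * r ^ (d:ℝ)) := by
    intro c hc0 hcle
    apply ENNReal.ofReal_le_ofReal
    calc c * ((min (s/r) 1) ^ q' * r ^ (d:ℝ))
        ≤ (ν + c₁ + c₂ + c₃ + 1) * ((min (s/r) 1) ^ q' * r ^ (d:ℝ)) :=
          mul_le_mul_of_nonneg_right hcle hXnn
      _ = (ν + c₁ + c₂ + c₃ + 1) * (min (s/r) 1) ^ q' * r ^ (d:ℝ) := by ring
  rcases le_or_gt s r with hsr | hsr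
  · -- main case s ≤ r
    have hmin : min (s/r) 1 = s/r := min_eq_left ((div_le_one hr).mpr hsr)
    rcases lt_or_ge (ENNReal.ofReal (4*r)) (EMetric.diam (frontier D)) with h4r | h4r
    · -- case (i): apply Aikawa at scale 4r
      by_cases hne : ({z : EuclideanSpace ℝ (Fin d) |
          z ∈ ball p r ∧ Metric.infDist z (frontier D) < s}).Nonempty
      · obtain ⟨z₀, hz₀b, hz₀d⟩ := hne
        obtain ⟨y₀, hy₀F, hy₀d⟩ := (Metric.infDist_lt_iff hfr).mp hz₀d
        have hsub : {z : EuclideanSpace ℝ (Fin d) |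
            z ∈ ball p r ∧ Metric.infDist z (frontier D) < s} ⊆
            {z : EuclideanSpace ℝ (Fin d) |
              z ∈ ball y₀ (4*r) ∧ Metric.infDist z (frontier D) < s} := by
          rintro z ⟨hz1, hz2⟩
          refine ⟨?_, hz2⟩
          rw [mem_ball] at hz1 ⊢
          rw [mem_ball] at hz₀b
          have h3 := dist_triangle z p y₀
          have h4 := dist_triangle p z₀ y₀
          have h5 : dist p z₀ = dist z₀ p := dist_comm _ _
          linarith
        have hb := hA y₀ hy₀F (4*r) s hs (by linarith) h4r
        have e1 : (4*r) ^ (d:ℝ) = (4:ℝ) ^ (d:ℝ) * r ^ (d:ℝ) :=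
          Real.mul_rpow (by norm_num) hr.le
        have e2 : (s/(4*r)) ^ q' ≤ (s/r) ^ q' := by
          apply Real.rpow_le_rpow (by positivity) _ hq'0.le
          apply div_le_div_of_nonneg_left hs.le hr (by linarith)
        calc volume {z : EuclideanSpace ℝ (Fin d) |
              z ∈ ball p r ∧ Metric.infDist z (frontier D) < s}
            ≤ volume {z : EuclideanSpace ℝ (Fin d) |
              z ∈ ball y₀ (4*r) ∧ Metric.infDist z (frontier D) < s} := measure_mono hsub
          _ ≤ ENNReal.ofReal (C₀ * (s/(4*r)) ^ q') * volume (ball y₀ (4*r)) := hb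
          _ = ENNReal.ofReal (C₀ * (s/(4*r)) ^ q' * (ν * (4*r) ^ (d:ℝ))) := by
              rw [volume_ball_eq hd y₀ (by linarith), ← ENNReal.ofReal_mul (by positivity)]
          _ ≤ ENNReal.ofReal (c₁ * ((min (s/r) 1) ^ q' * r ^ (d:ℝ))) := by
              apply ENNReal.ofReal_le_ofReal
              rw [e1, hmin]
              calc C₀ * (s/(4*r)) ^ q' * (ν * ((4:ℝ) ^ (d:ℝ) * r ^ (d:ℝ)))
                  = (C₀ * (ν * (4:ℝ) ^ (d:ℝ) * r ^ (d:ℝ))) * (s/(4*r)) ^ q' := by ring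
                _ ≤ (C₀ * (ν * (4:ℝ) ^ (d:ℝ) * r ^ (d:ℝ))) * (s/r) ^ q' := by
                    apply mul_le_mul_of_nonneg_left e2
                    apply mul_nonneg (by linarith) (by positivity)
                _ = c₁ * ((s/r) ^ q' * r ^ (d:ℝ)) := by rw [hc₁]; ring
          _ ≤ _ := hfinal c₁ hc₁0 (by linarith)
      · rw [Set.not_nonempty_iff_eq_empty.mp hne, measure_empty]
        exact zero_le
    · -- case (ii): large radius
      have hdne : EMetric.diam (frontier D) ≠ ⊤ :=
        ne_top_of_le_ne_top ENNReal.ofReal_ne_top h4r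
      have hdiam : EMetric.diam (frontier D) = ENNReal.ofReal ℓ :=
        (ENNReal.ofReal_toReal hdne).symm
      have hℓ4r : ℓ ≤ 4*r := ENNReal.toReal_le_of_le_ofReal (by linarith) h4r
      rcases lt_or_ge s (ℓ/16) with hsl | hsl
      · -- (iib): small s, covering bound
        have hℓpos : (0:ℝ) < ℓ := by linarith
        have h16 : ENNReal.ofReal (16*s) < EMetric.diam (frontier D) := by
          rw [hdiam]
          exact (ENNReal.ofReal_lt_ofReal_iff hℓpos).mpr (by linarith)
        have hKb := hKs s hs h16 hdne
        have e2 : r ^ (q'-(d:ℝ)) ≤ (ℓ/4) ^ (q'-(d:ℝ)) :=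
          Real.rpow_le_rpow_of_nonpos (by linarith) (by linarith) (by linarith)
        have e3 : s ^ q' = (s/r) ^ q' * (r ^ (d:ℝ) * r ^ (q'-(d:ℝ))) := by
          rw [Real.div_rpow hs.le hr.le, ← Real.rpow_add hr]
          have : (d:ℝ) + (q' - (d:ℝ)) = q' := by ring
          rw [this]
          field_simp
        calc volume {z : EuclideanSpace ℝ (Fin d) |
              z ∈ ball p r ∧ Metric.infDist z (frontier D) < s}
            ≤ volume {z : EuclideanSpace ℝ (Fin d) |
                Metric.infDist z (frontier D) < s} :=
              measure_mono (fun z hz => hz.2)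
          _ ≤ ENNReal.ofReal (K * s ^ q') := hKb
          _ ≤ ENNReal.ofReal (c₃ * ((min (s/r) 1) ^ q' * r ^ (d:ℝ))) := by
              apply ENNReal.ofReal_le_ofReal
              rw [hmin, e3, hc₃]
              have hsr' : (0:ℝ) ≤ (s/r) ^ q' := by positivity
              have hrd : (0:ℝ) ≤ r ^ (d:ℝ) := by positivity
              calc K * ((s/r) ^ q' * (r ^ (d:ℝ) * r ^ (q'-(d:ℝ))))
                  ≤ K * ((s/r) ^ q' * (r ^ (d:ℝ) * max 1 ((ℓ/4) ^ (q'-(d:ℝ))))) := by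
                    apply mul_le_mul_of_nonneg_left _ (by linarith)
                    apply mul_le_mul_of_nonneg_left _ hsr'
                    apply mul_le_mul_of_nonneg_left _ hrd
                    exact le_trans e2 (le_max_right _ _)
                _ = K * max 1 ((ℓ/4) ^ (q'-(d:ℝ))) * ((s/r) ^ q' * r ^ (d:ℝ)) := by ring
          _ ≤ _ := hfinal c₃ hc₃0 (by linarith)
      · -- (iia): ℓ ≤ 16 s
        obtain ⟨y₀, hy₀F⟩ := hfr
        have hFb : Bornology.IsBounded (frontier D) :=
          Metric.isBounded_iff_ediam_ne_top.mpr hdne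
        have hsub : {z : EuclideanSpace ℝ (Fin d) |
            z ∈ ball p r ∧ Metric.infDist z (frontier D) < s} ⊆ ball y₀ (17*s) := by
          rintro z ⟨_, hz2⟩
          obtain ⟨y, hyF, hyd⟩ := (Metric.infDist_lt_iff ⟨y₀, hy₀F⟩).mp hz2
          have hyy : dist y y₀ ≤ ℓ := Metric.dist_le_diam_of_mem hFb hyF hy₀F
          rw [mem_ball]
          have h3 := dist_triangle z y y₀
          linarith
        have e1 : (17*s) ^ (d:ℝ) = (17:ℝ) ^ (d:ℝ) * s ^ (d:ℝ) :=
          Real.mul_rpow (by norm_num) hs.le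
        have e2 : s ^ (d:ℝ) = s ^ q' * s ^ ((d:ℝ)-q') := by
          rw [← Real.rpow_add hs]
          congr 1
          ring
        have e3 : s ^ ((d:ℝ)-q') ≤ r ^ ((d:ℝ)-q') :=
          Real.rpow_le_rpow hs.le hsr (by linarith)
        have e4 : (s/r) ^ q' * r ^ (d:ℝ) = s ^ q' * r ^ ((d:ℝ)-q') := by
          rw [Real.div_rpow hs.le hr.le, Real.rpow_sub hr]
          have h1 : (0:ℝ) < r ^ q' := Real.rpow_pos_of_pos hr _
          field_simp
        calc volume {z : EuclideanSpace ℝ (Fin d) |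
              z ∈ ball p r ∧ Metric.infDist z (frontier D) < s}
            ≤ volume (ball y₀ (17*s)) := measure_mono hsub
          _ = ENNReal.ofReal (ν * (17*s) ^ (d:ℝ)) := volume_ball_eq hd y₀ (by linarith)
          _ ≤ ENNReal.ofReal (c₂ * ((min (s/r) 1) ^ q' * r ^ (d:ℝ))) := by
              apply ENNReal.ofReal_le_ofReal
              rw [hmin, e1, e2, hc₂, e4]
              have hsq : (0:ℝ) ≤ s ^ q' := by positivity
              calc ν * ((17:ℝ) ^ (d:ℝ) * (s ^ q' * s ^ ((d:ℝ)-q')))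
                  ≤ ν * ((17:ℝ) ^ (d:ℝ) * (s ^ q' * r ^ ((d:ℝ)-q'))) := by
                    apply mul_le_mul_of_nonneg_left _ hν0
                    apply mul_le_mul_of_nonneg_left _ (by positivity)
                    exact mul_le_mul_of_nonneg_left e3 hsq
                _ = (17:ℝ) ^ (d:ℝ) * ν * (s ^ q' * r ^ ((d:ℝ)-q')) := by ring
          _ ≤ _ := hfinal c₂ hc₂0 (by linarith)
  · -- easy case r < s
    have hmin : min (s/r) 1 = 1 := min_eq_right ((le_div_iff₀ hr).mpr (by linarith))
    calc volume {z : EuclideanSpace ℝ (Fin d) |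
          z ∈ ball p r ∧ Metric.infDist z (frontier D) < s}
        ≤ volume (ball p r) := measure_mono (fun z hz => hz.1)
      _ = ENNReal.ofReal (ν * r ^ (d:ℝ)) := volume_ball_eq hd p hr
      _ ≤ ENNReal.ofReal (ν * ((min (s/r) 1) ^ q' * r ^ (d:ℝ))) := by
          apply ENNReal.ofReal_le_ofReal
          rw [hmin, Real.one_rpow, one_mul]
      _ ≤ _ := hfinal ν hν0 (by linarith)

/-! ### L1: integral bound for the boundary weight over balls -/

lemma aux1 {d : ℕ} (hd : 1 ≤ d) (D : Set (EuclideanSpace ℝ (Fin d)))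
    (hfr : (frontier D).Nonempty) {β₁ q' : ℝ} (hβ₁ : 0 ≤ β₁) (hβq' : β₁ < q')
    (hq'd : q' ≤ (d:ℝ)) (hAik : Aikawa D q') :
    ∃ C_B : ℝ, 1 ≤ C_B ∧ ∀ (p : EuclideanSpace ℝ (Fin d)) (r : ℝ), 0 < r →
      (∫⁻ z in ball p r,
        ENNReal.ofReal ((max 1 (r / Metric.infDist z (frontier D))) ^ β₁)) ≤
      ENNReal.ofReal (C_B * r ^ (d:ℝ)) := by
  classical
  have hq'0 : 0 < q' := lt_of_le_of_lt hβ₁ hβq'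
  obtain ⟨C_A, hCA1, hCA⟩ := aux0 hd D hfr hq'0 hq'd hAik
  set ν : ℝ := (volume (ball (0 : EuclideanSpace ℝ (Fin d)) 1)).toReal with hνdef
  have hν0 : 0 ≤ ν := ENNReal.toReal_nonneg
  set a : ℝ := (2:ℝ) ^ β₁ with hadef
  have ha1 : 1 ≤ a := by
    rw [hadef, ← Real.rpow_zero 2]
    exact Real.rpow_le_rpow_of_exponent_le (by norm_num) hβ₁
  set b : ℝ := ((1:ℝ)/2) ^ q' with hbdef
  have hb0 : 0 ≤ b := by positivity
  set q : ℝ := a * b with hqdef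
  have hq0 : 0 ≤ q := by positivity
  have hq1 : q < 1 := by
    have hb' : b = ((2:ℝ) ^ q')⁻¹ := by
      rw [hbdef, one_div, Real.inv_rpow (by norm_num : (0:ℝ) ≤ 2)]
    rw [hqdef, hb', ← div_eq_mul_inv, div_lt_one (Real.rpow_pos_of_pos (by norm_num) _)]
    exact (Real.rpow_lt_rpow_left_iff (by norm_num)).mpr hβq'
  set M : ℝ := ν * a + C_A * a with hMdef
  have hM0 : 0 ≤ M := by
    apply add_nonneg (by positivity)
    exact mul_nonneg (by linarith) (by positivity)
  refine ⟨max 1 (M * (1-q)⁻¹), le_max_left _ _, ?_⟩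
  intro p r hr
  have hδm : Measurable (fun z : EuclideanSpace ℝ (Fin d) =>
      Metric.infDist z (frontier D)) := (continuous_infDist_pt _).measurable
  set S : ℕ → Set (EuclideanSpace ℝ (Fin d)) := fun k =>
    match k with
    | 0 => {z | z ∈ ball p r ∧ ¬(0 < Metric.infDist z (frontier D) ∧
        Metric.infDist z (frontier D) < (1/2)*r)}
    | Nat.succ k => {z | z ∈ ball p r ∧
        ((1:ℝ)/2)^(k+2)*r ≤ Metric.infDist z (frontier D) ∧
        Metric.infDist z (frontier D) < ((1:ℝ)/2)^(k+1)*r} with hSdef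
  have hSmeas : ∀ k, MeasurableSet (S k) := by
    intro k
    cases k with
    | zero =>
        exact measurableSet_ball.inter ((measurableSet_lt measurable_const hδm).inter
          (measurableSet_lt hδm measurable_const)).compl
    | succ k =>
        exact measurableSet_ball.inter ((measurableSet_le measurable_const hδm).inter
          (measurableSet_lt hδm measurable_const))
  have hcover : ball p r ⊆ ⋃ k, S k := by
    intro z hz
    by_cases hcase : 0 < Metric.infDist z (frontier D) ∧
        Metric.infDist z (frontier D) < (1/2)*r
    · obtain ⟨k, hk1, hk2⟩ := exists_dyadic hcase.1 hcase.2
      refine Set.mem_iUnion.mpr ⟨k+1, hz, ?_, ?_⟩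
      · calc ((1:ℝ)/2)^(k+2)*r = (1/2:ℝ)^(k+1) * ((1/2)*r) := by rw [pow_succ]; ring
          _ ≤ _ := hk1
      · calc Metric.infDist z (frontier D) < (1/2:ℝ)^k * ((1/2)*r) := hk2
          _ = ((1:ℝ)/2)^(k+1)*r := by rw [pow_succ]; ring
    · exact Set.mem_iUnion.mpr ⟨0, hz, hcase⟩
  have hpiece : ∀ k, (∫⁻ z in S k,
      ENNReal.ofReal ((max 1 (r / Metric.infDist z (frontier D))) ^ β₁)) ≤
      ENNReal.ofReal ((M * r ^ (d:ℝ)) * q ^ k) := by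
    intro k
    cases k with
    | zero =>
        have hb : ∀ z ∈ S 0,
            ENNReal.ofReal ((max 1 (r / Metric.infDist z (frontier D))) ^ β₁) ≤
            ENNReal.ofReal a := by
          intro z hz
          apply ENNReal.ofReal_le_ofReal
          have hmax : max 1 (r / Metric.infDist z (frontier D)) ≤ 2 := by
            rcases eq_or_lt_of_le (Metric.infDist_nonneg (x := z) (s := frontier D)) with h0 | h0
            · rw [← h0, _root_.div_zero]
              norm_num
            · have hnd : ¬ Metric.infDist z (frontier D) < (1/2)*r := fun hlt =>
                hz.2 ⟨h0, hlt⟩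
              push_neg at hnd
              apply max_le (by norm_num)
              rw [div_le_iff₀ h0]
              linarith
          calc (max 1 (r / Metric.infDist z (frontier D))) ^ β₁ ≤ (2:ℝ) ^ β₁ :=
                Real.rpow_le_rpow (le_trans zero_le_one (le_max_left _ _)) hmax hβ₁
            _ = a := rfl
        calc (∫⁻ z in S 0,
            ENNReal.ofReal ((max 1 (r / Metric.infDist z (frontier D))) ^ β₁))
            ≤ ∫⁻ _z in S 0, ENNReal.ofReal a := setLIntegral_mono' (hSmeas 0) hb
          _ = ENNReal.ofReal a * volume (S 0) := setLIntegral_const _ _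
          _ ≤ ENNReal.ofReal a * volume (ball p r) := by
              apply mul_le_mul_right
              exact measure_mono (fun z hz => hz.1)
          _ = ENNReal.ofReal a * ENNReal.ofReal (ν * r ^ (d:ℝ)) := by
              rw [volume_ball_eq hd p hr]
          _ = ENNReal.ofReal (a * (ν * r ^ (d:ℝ))) := by
              rw [← ENNReal.ofReal_mul (by linarith)]
          _ ≤ ENNReal.ofReal ((M * r ^ (d:ℝ)) * q ^ 0) := by
              apply ENNReal.ofReal_le_ofReal
              rw [pow_zero, mul_one, hMdef]
              have h1 : 0 ≤ C_A * a * r ^ (d:ℝ) := by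
                apply mul_nonneg (mul_nonneg (by linarith) (by linarith)) (by positivity)
              nlinarith
    | succ k =>
        have hple : ∀ z ∈ S (k+1),
            ENNReal.ofReal ((max 1 (r / Metric.infDist z (frontier D))) ^ β₁) ≤
            ENNReal.ofReal (a ^ (k+2)) := by
          intro z hz
          apply ENNReal.ofReal_le_ofReal
          obtain ⟨hz1, hz2, hz3⟩ := hz
          have hp2 : (0:ℝ) < (1/2:ℝ)^(k+2) := by positivity
          have hδ0 : 0 < Metric.infDist z (frontier D) := lt_of_lt_of_le (by positivity) hz2
          have hpow : ((1:ℝ)/2)^(k+2) * (2:ℝ)^(k+2) = 1 := by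
            rw [← mul_pow]
            norm_num
          have hmax : max 1 (r / Metric.infDist z (frontier D)) ≤ (2:ℝ)^(k+2) := by
            apply max_le (one_le_pow₀ (by norm_num))
            rw [div_le_iff₀ hδ0]
            have h2p : (0:ℝ) < (2:ℝ)^(k+2) := by positivity
            nlinarith
          calc (max 1 (r / Metric.infDist z (frontier D))) ^ β₁ ≤ ((2:ℝ)^(k+2)) ^ β₁ :=
                Real.rpow_le_rpow (le_trans zero_le_one (le_max_left _ _)) hmax hβ₁
            _ = a ^ (k+2) := pow_rpow_comm (by norm_num) β₁ (k+2)
        have hvol : volume (S (k+1)) ≤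
            ENNReal.ofReal (C_A * b ^ (k+1) * r ^ (d:ℝ)) := by
          have hsub : S (k+1) ⊆ {z : EuclideanSpace ℝ (Fin d) |
              z ∈ ball p r ∧ Metric.infDist z (frontier D) < ((1:ℝ)/2)^(k+1)*r} :=
            fun z hz => ⟨hz.1, hz.2.2⟩
          have h := hCA p r (((1:ℝ)/2)^(k+1)*r) hr (by positivity)
          have hminval : min ((((1:ℝ)/2)^(k+1)*r)/r) 1 = ((1:ℝ)/2)^(k+1) := by
            rw [mul_div_assoc, div_self hr.ne', mul_one]
            exact min_eq_left (pow_le_one₀ (by norm_num) (by norm_num))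
          rw [hminval] at h
          have hrw : (((1:ℝ)/2)^(k+1)) ^ q' = b ^ (k+1) := pow_rpow_comm (by norm_num) q' (k+1)
          rw [hrw] at h
          exact le_trans (measure_mono hsub) h
        calc (∫⁻ z in S (k+1),
            ENNReal.ofReal ((max 1 (r / Metric.infDist z (frontier D))) ^ β₁))
            ≤ ∫⁻ _z in S (k+1), ENNReal.ofReal (a ^ (k+2)) :=
              setLIntegral_mono' (hSmeas (k+1)) hple
          _ = ENNReal.ofReal (a ^ (k+2)) * volume (S (k+1)) := setLIntegral_const _ _
          _ ≤ ENNReal.ofReal (a ^ (k+2)) * ENNReal.ofReal (C_A * b ^ (k+1) * r ^ (d:ℝ)) :=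
              mul_le_mul_right hvol _
          _ = ENNReal.ofReal (a ^ (k+2) * (C_A * b ^ (k+1) * r ^ (d:ℝ))) := by
              rw [← ENNReal.ofReal_mul (by positivity)]
          _ ≤ ENNReal.ofReal ((M * r ^ (d:ℝ)) * q ^ (k+1)) := by
              apply ENNReal.ofReal_le_ofReal
              have e : a ^ (k+2) * (C_A * b ^ (k+1) * r ^ (d:ℝ)) =
                  (C_A * a) * (q ^ (k+1) * r ^ (d:ℝ)) := by
                rw [hqdef, mul_pow]
                ring
              rw [e]
              have h1 : 0 ≤ q ^ (k+1) * r ^ (d:ℝ) := by positivity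
              have h2 : C_A * a ≤ M := by
                rw [hMdef]
                nlinarith
              calc (C_A * a) * (q ^ (k+1) * r ^ (d:ℝ))
                  ≤ M * (q ^ (k+1) * r ^ (d:ℝ)) := mul_le_mul_of_nonneg_right h2 h1
                _ = (M * r ^ (d:ℝ)) * q ^ (k+1) := by ring
  calc (∫⁻ z in ball p r,
      ENNReal.ofReal ((max 1 (r / Metric.infDist z (frontier D))) ^ β₁))
      ≤ ∫⁻ z in ⋃ k, S k,
        ENNReal.ofReal ((max 1 (r / Metric.infDist z (frontier D))) ^ β₁) :=
        lintegral_mono_set hcover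
    _ ≤ ∑' k, ∫⁻ z in S k,
        ENNReal.ofReal ((max 1 (r / Metric.infDist z (frontier D))) ^ β₁) :=
        lintegral_iUnion_le _ _
    _ ≤ ∑' k, ENNReal.ofReal ((M * r ^ (d:ℝ)) * q ^ k) := ENNReal.tsum_le_tsum hpiece
    _ ≤ ENNReal.ofReal ((M * r ^ (d:ℝ)) * (1-q)⁻¹) :=
        tsum_ofReal_geometric_le _ _ (by positivity) hq0 hq1
    _ ≤ ENNReal.ofReal (max 1 (M * (1-q)⁻¹) * r ^ (d:ℝ)) := by
        apply ENNReal.ofReal_le_ofReal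
        have h1 : M * r ^ (d:ℝ) * (1-q)⁻¹ = (M * (1-q)⁻¹) * r ^ (d:ℝ) := by ring
        rw [h1]
        exact mul_le_mul_of_nonneg_right (le_max_right _ _) (by positivity)

/-! ### L2: combined integral bound -/

lemma aux2 {d : ℕ} (hd : 1 ≤ d) (D : Set (EuclideanSpace ℝ (Fin d)))
    (hfr : (frontier D).Nonempty) {β₁ q' lam : ℝ} (hβ₁ : 0 ≤ β₁) (hβq' : β₁ < q')
    (hq'd : q' ≤ (d:ℝ)) (hAik : Aikawa D q') (hlam0 : 0 ≤ lam) (hlamd : lam + β₁ < (d:ℝ)) :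
    ∃ C₂ : ℝ, 1 ≤ C₂ ∧ ∀ (p x : EuclideanSpace ℝ (Fin d)) (τ R : ℝ), 0 < τ → τ ≤ R →
      (∫⁻ z in ball p R, ENNReal.ofReal ((min 1 (τ / dist x z)) ^ lam *
          (max 1 (R / Metric.infDist z (frontier D))) ^ β₁)) ≤
      ENNReal.ofReal (C₂ * τ ^ lam * R ^ ((d:ℝ) - lam)) := by
  classical
  obtain ⟨C_B, hCB1, hCB⟩ := aux1 hd D hfr hβ₁ hβq' hq'd hAik
  set a₂ : ℝ := (2:ℝ) ^ lam with ha₂def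
  set a₃ : ℝ := (2:ℝ) ^ β₁ with ha₃def
  set a₄ : ℝ := ((1:ℝ)/2) ^ (d:ℝ) with ha₄def
  have ha₂0 : 0 < a₂ := Real.rpow_pos_of_pos (by norm_num) _
  have ha₃0 : 0 < a₃ := Real.rpow_pos_of_pos (by norm_num) _
  have ha₄0 : 0 < a₄ := Real.rpow_pos_of_pos (by norm_num) _
  set q₂ : ℝ := a₂ * a₃ * a₄ with hq₂def
  have hq₂eq : q₂ = (2:ℝ) ^ (lam + β₁ - (d:ℝ)) := by
    rw [hq₂def, ha₂def, ha₃def, ha₄def, one_div,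
      Real.inv_rpow (by norm_num : (0:ℝ) ≤ 2), ← Real.rpow_neg (by norm_num : (0:ℝ) ≤ 2),
      ← Real.rpow_add (by norm_num : (0:ℝ) < 2), ← Real.rpow_add (by norm_num : (0:ℝ) < 2)]
    congr 1
    try ring
  have hq₂0 : 0 < q₂ := by positivity
  have hq₂1 : q₂ < 1 := by
    rw [hq₂eq]
    exact Real.rpow_lt_one_of_one_lt_of_neg (by norm_num) (by linarith)
  set M₂ : ℝ := 2 * (a₂ * C_B) with hM₂def
  have hM₂0 : 0 ≤ M₂ := by
    apply mul_nonneg (by norm_num)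
    exact mul_nonneg ha₂0.le (by linarith)
  have hCBa : a₂ * C_B ≤ M₂ := by
    rw [hM₂def]
    nlinarith [mul_nonneg ha₂0.le (le_trans zero_le_one hCB1)]
  refine ⟨max 1 (M₂ * (1-q₂)⁻¹), le_max_left _ _, ?_⟩
  intro p x τ R hτ hτR
  have hR : 0 < R := lt_of_lt_of_le hτ hτR
  have hdm : Measurable (fun z : EuclideanSpace ℝ (Fin d) => dist x z) :=
    (continuous_const.dist continuous_id).measurable
  set δf : EuclideanSpace ℝ (Fin d) → ℝ := fun z => Metric.infDist z (frontier D) with hδfdef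
  set T : ℕ → Set (EuclideanSpace ℝ (Fin d)) := fun k =>
    match k with
    | 0 => {z | z ∈ ball p R ∧ ¬(0 < dist x z ∧ dist x z < (1/2)*R)}
    | Nat.succ j => {z | z ∈ ball p R ∧
        ((1:ℝ)/2)^(j+2)*R ≤ dist x z ∧ dist x z < ((1:ℝ)/2)^(j+1)*R} with hTdef
  have hTmeas : ∀ k, MeasurableSet (T k) := by
    intro k
    cases k with
    | zero =>
        exact measurableSet_ball.inter ((measurableSet_lt measurable_const hdm).inter
          (measurableSet_lt hdm measurable_const)).compl
    | succ j =>
        exact measurableSet_ball.inter ((measurableSet_le measurable_const hdm).inter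
          (measurableSet_lt hdm measurable_const))
  have hcover : ball p R ⊆ ⋃ k, T k := by
    intro z hz
    by_cases hcase : 0 < dist x z ∧ dist x z < (1/2)*R
    · obtain ⟨k, hk1, hk2⟩ := exists_dyadic hcase.1 hcase.2
      refine Set.mem_iUnion.mpr ⟨k+1, hz, ?_, ?_⟩
      · calc ((1:ℝ)/2)^(k+2)*R = (1/2:ℝ)^(k+1) * ((1/2)*R) := by rw [pow_succ]; ring
          _ ≤ _ := hk1
      · calc dist x z < (1/2:ℝ)^k * ((1/2)*R) := hk2
          _ = ((1:ℝ)/2)^(k+1)*R := by rw [pow_succ]; ring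
    · exact Set.mem_iUnion.mpr ⟨0, hz, hcase⟩
  have hminnn : ∀ z : EuclideanSpace ℝ (Fin d), (0:ℝ) ≤ min 1 (τ / dist x z) :=
    fun z => le_min zero_le_one (by positivity)
  have hpiece : ∀ k, (∫⁻ z in T k, ENNReal.ofReal ((min 1 (τ / dist x z)) ^ lam *
      (max 1 (R / δf z)) ^ β₁)) ≤
      ENNReal.ofReal ((M₂ * (τ ^ lam * R ^ ((d:ℝ) - lam))) * q₂ ^ k) := by
    intro k
    cases k with
    | zero =>
        have hpt : ∀ z ∈ T 0, ENNReal.ofReal ((min 1 (τ / dist x z)) ^ lam *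
            (max 1 (R / δf z)) ^ β₁) ≤
            ENNReal.ofReal ((2*τ/R) ^ lam * (max 1 (R / δf z)) ^ β₁) := by
          intro z hz
          apply ENNReal.ofReal_le_ofReal
          apply mul_le_mul_of_nonneg_right _ (by positivity)
          apply Real.rpow_le_rpow (hminnn z) _ hlam0
          rcases eq_or_lt_of_le (dist_nonneg (x := x) (y := z)) with h0 | h0
          · rw [← h0, _root_.div_zero]
            exact le_trans (min_le_right _ _) (by positivity)
          · have hnd : ¬ dist x z < (1/2)*R := fun hlt => hz.2 ⟨h0, hlt⟩
            push_neg at hnd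
            refine le_trans (min_le_right _ _) ?_
            rw [div_le_div_iff₀ h0 hR]
            nlinarith
        calc (∫⁻ z in T 0, ENNReal.ofReal ((min 1 (τ / dist x z)) ^ lam *
              (max 1 (R / δf z)) ^ β₁))
            ≤ ∫⁻ z in T 0, ENNReal.ofReal ((2*τ/R) ^ lam * (max 1 (R / δf z)) ^ β₁) :=
              setLIntegral_mono' (hTmeas 0) hpt
          _ ≤ ∫⁻ z in ball p R, ENNReal.ofReal ((2*τ/R) ^ lam * (max 1 (R / δf z)) ^ β₁) :=
              lintegral_mono_set (fun z hz => hz.1)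
          _ = ENNReal.ofReal ((2*τ/R) ^ lam) *
              ∫⁻ z in ball p R, ENNReal.ofReal ((max 1 (R / δf z)) ^ β₁) := by
              rw [← lintegral_const_mul' _ _ ENNReal.ofReal_ne_top]
              congr 1
              ext z
              rw [← ENNReal.ofReal_mul (by positivity)]
          _ ≤ ENNReal.ofReal ((2*τ/R) ^ lam) * ENNReal.ofReal (C_B * R ^ (d:ℝ)) :=
              mul_le_mul_right (hCB p R hR) _
          _ = ENNReal.ofReal ((2*τ/R) ^ lam * (C_B * R ^ (d:ℝ))) := by
              rw [← ENNReal.ofReal_mul (by positivity)]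
          _ ≤ ENNReal.ofReal ((M₂ * (τ ^ lam * R ^ ((d:ℝ) - lam))) * q₂ ^ 0) := by
              apply ENNReal.ofReal_le_ofReal
              rw [pow_zero, mul_one]
              have e1 : (2*τ/R) ^ lam = a₂ * τ ^ lam / R ^ lam := by
                rw [Real.div_rpow (by positivity) hR.le,
                  Real.mul_rpow (by norm_num) hτ.le, ha₂def]
              have e2 : R ^ ((d:ℝ) - lam) = R ^ (d:ℝ) / R ^ lam := Real.rpow_sub hR _ _
              rw [e1, e2]
              have hRl : (0:ℝ) < R ^ lam := Real.rpow_pos_of_pos hR _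
              rw [div_mul_eq_mul_div, div_le_iff₀ hRl]
              have h1 : a₂ * τ ^ lam * (C_B * R ^ (d:ℝ)) =
                  (a₂ * C_B) * (τ ^ lam * R ^ (d:ℝ)) := by ring
              have h2 : M₂ * (τ ^ lam * (R ^ (d:ℝ) / R ^ lam)) * R ^ lam =
                  M₂ * (τ ^ lam * R ^ (d:ℝ)) := by
                field_simp
              rw [h1, h2]
              exact mul_le_mul_of_nonneg_right hCBa (by positivity)
    | succ j =>
        set rj : ℝ := ((1:ℝ)/2)^(j+1)*R with hrjdef
        have hrj0 : 0 < rj := by positivity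
        have hRrj : (2:ℝ)^(j+1) * rj = R := by
          rw [hrjdef]
          have : (2:ℝ)^(j+1) * ((1:ℝ)/2)^(j+1) = 1 := by
            rw [← mul_pow]
            norm_num
          calc (2:ℝ)^(j+1) * (((1:ℝ)/2)^(j+1)*R) = ((2:ℝ)^(j+1) * ((1:ℝ)/2)^(j+1))*R := by ring
            _ = R := by rw [this, one_mul]
        have hone_le : (1:ℝ) ≤ (2:ℝ)^(j+1) := one_le_pow₀ (by norm_num)
        have hpt : ∀ z ∈ T (j+1), ENNReal.ofReal ((min 1 (τ / dist x z)) ^ lam *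
            (max 1 (R / δf z)) ^ β₁) ≤
            ENNReal.ofReal ((((2:ℝ)^(j+2)*τ/R) ^ lam * ((2:ℝ)^(j+1)) ^ β₁) *
              (max 1 (rj / δf z)) ^ β₁) := by
          intro z hz
          apply ENNReal.ofReal_le_ofReal
          obtain ⟨hz1, hz2, hz3⟩ := hz
          have hd0 : 0 < dist x z := lt_of_lt_of_le (by positivity) hz2
          have hminb : (min 1 (τ / dist x z)) ^ lam ≤ ((2:ℝ)^(j+2)*τ/R) ^ lam := by
            apply Real.rpow_le_rpow (hminnn z) _ hlam0
            refine le_trans (min_le_right _ _) ?_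
            rw [div_le_div_iff₀ hd0 hR]
            have hpow : ((1:ℝ)/2)^(j+2) * (2:ℝ)^(j+2) = 1 := by
              rw [← mul_pow]; norm_num
            calc τ * R = (((1:ℝ)/2)^(j+2) * (2:ℝ)^(j+2)) * (τ * R) := by
                  rw [hpow, one_mul]
              _ = (2:ℝ)^(j+2) * τ * (((1:ℝ)/2)^(j+2) * R) := by ring
              _ ≤ (2:ℝ)^(j+2) * τ * dist x z := by
                  apply mul_le_mul_of_nonneg_left hz2 (by positivity)
          have hmaxb : (max 1 (R / δf z)) ^ β₁ ≤
              ((2:ℝ)^(j+1)) ^ β₁ * (max 1 (rj / δf z)) ^ β₁ := by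
            have e : R / δf z = (2:ℝ)^(j+1) * (rj / δf z) := by
              rw [← hRrj]
              ring
            rw [e, ← Real.mul_rpow (by positivity)
              (le_trans zero_le_one (le_max_left _ _))]
            apply Real.rpow_le_rpow (le_trans zero_le_one (le_max_left _ _))
              (max_one_scale hone_le) hβ₁
          calc (min 1 (τ / dist x z)) ^ lam * (max 1 (R / δf z)) ^ β₁
              ≤ ((2:ℝ)^(j+2)*τ/R) ^ lam *
                (((2:ℝ)^(j+1)) ^ β₁ * (max 1 (rj / δf z)) ^ β₁) := by
                apply mul_le_mul hminb hmaxb (by positivity) (by positivity)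
            _ = (((2:ℝ)^(j+2)*τ/R) ^ lam * ((2:ℝ)^(j+1)) ^ β₁) *
                (max 1 (rj / δf z)) ^ β₁ := by ring
        have hsub : T (j+1) ⊆ ball x rj := by
          intro z hz
          rw [mem_ball, dist_comm]
          exact hz.2.2
        calc (∫⁻ z in T (j+1), ENNReal.ofReal ((min 1 (τ / dist x z)) ^ lam *
              (max 1 (R / δf z)) ^ β₁))
            ≤ ∫⁻ z in T (j+1), ENNReal.ofReal ((((2:ℝ)^(j+2)*τ/R) ^ lam *
                ((2:ℝ)^(j+1)) ^ β₁) * (max 1 (rj / δf z)) ^ β₁) :=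
              setLIntegral_mono' (hTmeas (j+1)) hpt
          _ ≤ ∫⁻ z in ball x rj, ENNReal.ofReal ((((2:ℝ)^(j+2)*τ/R) ^ lam *
                ((2:ℝ)^(j+1)) ^ β₁) * (max 1 (rj / δf z)) ^ β₁) :=
              lintegral_mono_set hsub
          _ = ENNReal.ofReal (((2:ℝ)^(j+2)*τ/R) ^ lam * ((2:ℝ)^(j+1)) ^ β₁) *
              ∫⁻ z in ball x rj, ENNReal.ofReal ((max 1 (rj / δf z)) ^ β₁) := by
              rw [← lintegral_const_mul' _ _ ENNReal.ofReal_ne_top]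
              congr 1
              ext z
              rw [← ENNReal.ofReal_mul (by positivity)]
          _ ≤ ENNReal.ofReal (((2:ℝ)^(j+2)*τ/R) ^ lam * ((2:ℝ)^(j+1)) ^ β₁) *
              ENNReal.ofReal (C_B * rj ^ (d:ℝ)) := mul_le_mul_right (hCB x rj hrj0) _
          _ = ENNReal.ofReal ((((2:ℝ)^(j+2)*τ/R) ^ lam * ((2:ℝ)^(j+1)) ^ β₁) *
              (C_B * rj ^ (d:ℝ))) := by
              rw [← ENNReal.ofReal_mul (by positivity)]
          _ ≤ ENNReal.ofReal ((M₂ * (τ ^ lam * R ^ ((d:ℝ) - lam))) * q₂ ^ (j+1)) := by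
              apply ENNReal.ofReal_le_ofReal
              have e1 : ((2:ℝ)^(j+2)*τ/R) ^ lam = a₂^(j+2) * τ ^ lam / R ^ lam := by
                rw [Real.div_rpow (by positivity) hR.le,
                  Real.mul_rpow (by positivity) hτ.le, ha₂def,
                  pow_rpow_comm (by norm_num) lam (j+2)]
              have e2 : ((2:ℝ)^(j+1)) ^ β₁ = a₃^(j+1) := by
                rw [ha₃def, pow_rpow_comm (by norm_num) β₁ (j+1)]
              have e3 : rj ^ (d:ℝ) = a₄^(j+1) * R ^ (d:ℝ) := by
                rw [hrjdef, Real.mul_rpow (by positivity) hR.le, ha₄def,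
                  pow_rpow_comm (by norm_num) (d:ℝ) (j+1)]
              have e4 : R ^ ((d:ℝ) - lam) = R ^ (d:ℝ) / R ^ lam := Real.rpow_sub hR _ _
              have hRl : (0:ℝ) < R ^ lam := Real.rpow_pos_of_pos hR _
              rw [e1, e2, e3, e4]
              have key : a₂^(j+2) * τ ^ lam / R ^ lam * a₃^(j+1) *
                  (C_B * (a₄^(j+1) * R ^ (d:ℝ))) =
                  ((a₂ * C_B) * (τ ^ lam * (R ^ (d:ℝ) / R ^ lam))) * q₂ ^ (j+1) := by
                rw [hq₂def, mul_pow, mul_pow]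
                field_simp
                ring
              rw [key]
              have h1 : 0 ≤ (τ ^ lam * (R ^ (d:ℝ) / R ^ lam)) * q₂ ^ (j+1) := by positivity
              calc ((a₂ * C_B) * (τ ^ lam * (R ^ (d:ℝ) / R ^ lam))) * q₂ ^ (j+1)
                  = (a₂ * C_B) * ((τ ^ lam * (R ^ (d:ℝ) / R ^ lam)) * q₂ ^ (j+1)) := by ring
                _ ≤ M₂ * ((τ ^ lam * (R ^ (d:ℝ) / R ^ lam)) * q₂ ^ (j+1)) :=
                    mul_le_mul_of_nonneg_right hCBa h1
                _ = (M₂ * (τ ^ lam * (R ^ (d:ℝ) / R ^ lam))) * q₂ ^ (j+1) := by ring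
  calc (∫⁻ z in ball p R, ENNReal.ofReal ((min 1 (τ / dist x z)) ^ lam *
        (max 1 (R / δf z)) ^ β₁))
      ≤ ∫⁻ z in ⋃ k, T k, ENNReal.ofReal ((min 1 (τ / dist x z)) ^ lam *
        (max 1 (R / δf z)) ^ β₁) := lintegral_mono_set hcover
    _ ≤ ∑' k, ∫⁻ z in T k, ENNReal.ofReal ((min 1 (τ / dist x z)) ^ lam *
        (max 1 (R / δf z)) ^ β₁) := lintegral_iUnion_le _ _
    _ ≤ ∑' k, ENNReal.ofReal ((M₂ * (τ ^ lam * R ^ ((d:ℝ) - lam))) * q₂ ^ k) :=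
        ENNReal.tsum_le_tsum hpiece
    _ ≤ ENNReal.ofReal ((M₂ * (τ ^ lam * R ^ ((d:ℝ) - lam))) * (1-q₂)⁻¹) :=
        tsum_ofReal_geometric_le _ _ (by positivity) hq₂0.le hq₂1
    _ ≤ ENNReal.ofReal (max 1 (M₂ * (1-q₂)⁻¹) * τ ^ lam * R ^ ((d:ℝ) - lam)) := by
        apply ENNReal.ofReal_le_ofReal
        have h1 : M₂ * (τ ^ lam * R ^ ((d:ℝ) - lam)) * (1-q₂)⁻¹ =
            (M₂ * (1-q₂)⁻¹) * (τ ^ lam * R ^ ((d:ℝ) - lam)) := by ring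
        have h2 : max 1 (M₂ * (1-q₂)⁻¹) * τ ^ lam * R ^ ((d:ℝ) - lam) =
            max 1 (M₂ * (1-q₂)⁻¹) * (τ ^ lam * R ^ ((d:ℝ) - lam)) := by ring
        rw [h1, h2]
        exact mul_le_mul_of_nonneg_right (le_max_right _ _) (by positivity)

/-! ### Main theorem -/

theorem stmt15 {d : ℕ} (hd : 1 ≤ d) (D : Set (EuclideanSpace ℝ (Fin d)))
    (hDopen : IsOpen D) (hDne : D.Nonempty) (hfr : (frontier D).Nonempty)
    (Φ : ℝ → ℝ) (β₁ C_Φ : ℝ) (hβ₁ : 0 ≤ β₁) (hC_Φ : 1 ≤ C_Φ)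
    (hΦ0 : Φ 0 = 1) (hΦ1 : ∀ r : ℝ, 0 ≤ r → 1 ≤ Φ r)
    (hΦmono : MonotoneOn Φ (Set.Ici 0)) (hΦcont : ContinuousOn Φ (Set.Ici 0))
    (hΦscale : ∀ s r : ℝ, 0 < s → s ≤ r → Φ r ≤ C_Φ * (r / s) ^ β₁ * Φ s)
    (α : ℝ) (hα0 : 0 < α) (hα2 : α < 2) (A₀ : ℝ≥0∞) (hA₀ : 0 < A₀)
    (J : EuclideanSpace ℝ (Fin d) → EuclideanSpace ℝ (Fin d) → ℝ)
    (C₁ : ℝ) (hC₁ : 1 < C₁)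
    (hJnn : ∀ x y, 0 ≤ J x y)
    (hJmeas : Measurable (Function.uncurry J))
    (hJsym : ∀ x ∈ D, ∀ y ∈ D, J x y = J y x)
    (hJbound : ∀ x ∈ D, ∀ y ∈ D, x ≠ y →
      C₁⁻¹ * (dist x y ^ (-((d : ℝ) + α)) *
          Φ ((truncMin A₀ (dist x y)) ^ 2 /
            (truncMin A₀ (deltaD D x) * truncMin A₀ (deltaD D y)))) ≤ J x y ∧
      J x y ≤ C₁ * (dist x y ^ (-((d : ℝ) + α)) *
          Φ ((truncMin A₀ (dist x y)) ^ 2 /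
            (truncMin A₀ (deltaD D x) * truncMin A₀ (deltaD D y)))))
    (hβα : β₁ < α) (hβd : 2 * β₁ ≤ (d : ℝ) + α)
    (q' : ℝ) (hβq' : β₁ < q') (hq'd : q' ≤ (d : ℝ)) (hAik : Aikawa D q')
    (lam : ℝ) (hlam0 : 0 ≤ lam) (hlamd : lam < (d : ℝ) - β₁) :
    ∃ C : ℝ, 0 < C ∧ ∀ t ρ : ℝ, 0 < t → t ^ (1 / α) < ρ →
      ENNReal.ofReal ρ < EMetric.diam D →
      ∀ x ∈ closure D, ∀ w ∈ D,
      (∫⁻ z in D \ Metric.ball w ρ,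
          ENNReal.ofReal (t ^ (-(d : ℝ) / α) *
            (min 1 (t ^ (1 / α) / dist x z)) ^ lam * J w z)) ≤
        ENNReal.ofReal (C * t ^ ((lam - (d : ℝ)) / α) * ρ ^ (-(lam + α)) *
          Φ (truncMin A₀ ρ / truncMin A₀ (deltaD D w))) := by
  classical
  have hC₁0 : (0:ℝ) ≤ C₁ := by linarith
  have hlam' : lam + β₁ < (d:ℝ) := by linarith
  obtain ⟨C₂, hC₂1, hC₂⟩ := aux2 hd D hfr hβ₁ hβq' hq'd hAik hlam0 hlam'
  set e₁ : ℝ := (2:ℝ) ^ (β₁ - (d:ℝ) - α) with he₁def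
  set e₂ : ℝ := (2:ℝ) ^ ((d:ℝ) - lam) with he₂def
  have he₁0 : 0 < e₁ := Real.rpow_pos_of_pos (by norm_num) _
  have he₂0 : 0 < e₂ := Real.rpow_pos_of_pos (by norm_num) _
  set q₃ : ℝ := e₁ * e₂ with hq₃def
  have hq₃eq : q₃ = (2:ℝ) ^ (β₁ - α - lam) := by
    rw [hq₃def, he₁def, he₂def, ← Real.rpow_add (by norm_num : (0:ℝ) < 2)]
    congr 1
    ring
  have hq₃0 : 0 < q₃ := by positivity
  have hq₃1 : q₃ < 1 := by
    rw [hq₃eq]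
    exact Real.rpow_lt_one_of_one_lt_of_neg (by norm_num) (by linarith)
  have hinv0 : 0 < (1 - q₃)⁻¹ := inv_pos.mpr (by linarith)
  refine ⟨C₁ * C_Φ * C₂ * e₂ * (1 - q₃)⁻¹, by positivity, ?_⟩
  intro t ρ ht hτρ hρdiam x hx w hw
  set τ : ℝ := t ^ (1/α) with hτdef
  have hτ0 : 0 < τ := Real.rpow_pos_of_pos ht _
  have hρ0 : 0 < ρ := lt_trans hτ0 hτρ
  have hδpos : ∀ y ∈ D, 0 < Metric.infDist y (frontier D) := by
    intro y hy
    rw [← isClosed_frontier.notMem_iff_infDist_pos hfr]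
    intro hyF
    rw [hDopen.frontier_eq] at hyF
    exact hyF.2 hy
  have hδw : 0 < deltaD D w := hδpos w hw
  set Φb : ℝ := Φ (truncMin A₀ ρ / truncMin A₀ (deltaD D w)) with hΦbdef
  have hbq : 0 < truncMin A₀ ρ / truncMin A₀ (deltaD D w) :=
    div_pos (truncMin_pos hA₀ hρ0) (truncMin_pos hA₀ hδw)
  have hΦb1 : 1 ≤ Φb := hΦ1 _ hbq.le
  have hΦb0 : 0 ≤ Φb := by linarith
  have hdm : Measurable (fun z : EuclideanSpace ℝ (Fin d) => dist w z) :=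
    (continuous_const.dist continuous_id).measurable
  set Sh : ℕ → Set (EuclideanSpace ℝ (Fin d)) := fun n =>
    {z | z ∈ D ∧ (2:ℝ)^n * ρ ≤ dist w z ∧ dist w z < (2:ℝ)^(n+1) * ρ} with hShdef
  have hShmeas : ∀ n, MeasurableSet (Sh n) := fun n =>
    hDopen.measurableSet.inter ((measurableSet_le measurable_const hdm).inter
      (measurableSet_lt hdm measurable_const))
  have hcover : D \ ball w ρ ⊆ ⋃ n, Sh n := by
    rintro z ⟨hzD, hzB⟩
    have hρz : ρ ≤ dist w z := by
      rw [mem_ball, dist_comm] at hzB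
      exact not_lt.mp hzB
    have hex : ∃ n : ℕ, dist w z < (2:ℝ)^(n+1) * ρ := by
      obtain ⟨n, hn⟩ := pow_unbounded_of_one_lt (dist w z / ρ) (by norm_num : (1:ℝ) < 2)
      refine ⟨n, ?_⟩
      have h1 : dist w z < (2:ℝ)^n * ρ := by
        rw [div_lt_iff₀ hρ0] at hn
        linarith [hn]
      have h2 : (2:ℝ)^n * ρ ≤ (2:ℝ)^(n+1) * ρ := by
        apply mul_le_mul_of_nonneg_right _ hρ0.le
        apply pow_le_pow_right₀ (by norm_num) (by omega)
      linarith
    have hspec := Nat.find_spec hex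
    rcases Nat.eq_zero_or_pos (Nat.find hex) with h0 | hpos
    · refine Set.mem_iUnion.mpr ⟨0, hzD, by simpa using hρz, ?_⟩
      rw [h0] at hspec
      simpa using hspec
    · obtain ⟨k, hk⟩ := Nat.exists_eq_succ_of_ne_zero (Nat.pos_iff_ne_zero.mp hpos)
      refine Set.mem_iUnion.mpr ⟨k+1, hzD, ?_, ?_⟩
      · have := Nat.find_min hex (by omega : k < Nat.find hex)
        push_neg at this
        exact this
      · rw [hk] at hspec
        exact hspec
  -- pointwise bound on each shell
  have key : ∀ n : ℕ, ∀ z ∈ Sh n,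
      t ^ (-(d:ℝ)/α) * (min 1 (τ / dist x z)) ^ lam * J w z ≤
      (t ^ (-(d:ℝ)/α) * (C₁ * C_Φ * Φb *
        (ρ ^ (-β₁) * ((2:ℝ)^n * ρ) ^ (β₁ - (d:ℝ) - α)))) *
      ((min 1 (τ / dist x z)) ^ lam *
        (max 1 (((2:ℝ)^(n+1) * ρ) / deltaD D z)) ^ β₁) := by
    intro n z hz
    obtain ⟨hzD, hzl, hzu⟩ := hz
    have hLn0 : (0:ℝ) < (2:ℝ)^n * ρ := by positivity
    have hdwz0 : 0 < dist w z := lt_of_lt_of_le hLn0 hzl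
    have hρle : ρ ≤ dist w z := by
      have h1 : ρ ≤ (2:ℝ)^n * ρ := le_mul_of_one_le_left hρ0.le (one_le_pow₀ (by norm_num))
      linarith
    have hne : w ≠ z := dist_pos.mp hdwz0
    have hδz : 0 < deltaD D z := hδpos z hzD
    have hJu := (hJbound w hw z hzD hne).2
    set ud : ℝ := truncMin A₀ (dist w z) with huddef
    set uw : ℝ := truncMin A₀ (deltaD D w) with huwdef
    set uz : ℝ := truncMin A₀ (deltaD D z) with huzdef
    set ur : ℝ := truncMin A₀ ρ with hurdef
    have hud0 : 0 < ud := truncMin_pos hA₀ hdwz0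
    have huw0 : 0 < uw := truncMin_pos hA₀ hδw
    have huz0 : 0 < uz := truncMin_pos hA₀ hδz
    have hur0 : 0 < ur := truncMin_pos hA₀ hρ0
    have haeq : ud^2/(uw*uz) = (ud^2/(ur*uz)) * (ur/uw) := by
      field_simp
    have hΦarg : Φ (ud^2/(uw*uz)) ≤ C_Φ * (max (ud^2/(ur*uz)) 1) ^ β₁ * Φb := by
      rw [haeq]
      exact Phi_mul_le hβ₁ hC_Φ hΦ1 hΦmono hΦscale (by positivity)
        (div_pos hur0 huw0)
    -- bound the max term
    have hsplit : ud^2/(ur*uz) = (ud/uz) * (ud/ur) := by ring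
    have hstep2 : max ((ud/uz) * (ud/ur)) 1 ≤ max (ud/uz) 1 * max (ud/ur) 1 :=
      max_one_mul_le (by positivity) (by positivity)
    have hstep3 : max (ud/uz) 1 ≤ max (dist w z / deltaD D z) 1 := by
      apply max_le _ (le_max_right _ _)
      rcases le_or_gt (deltaD D z) (dist w z) with h | h
      · exact le_trans (truncMin_ratio_le hA₀ hδz h) (le_max_left _ _)
      · have hud_le : ud ≤ uz := truncMin_mono _ h.le
        exact le_trans ((div_le_one huz0).mpr hud_le) (le_max_right _ _)
    have hstep4 : max (ud/ur) 1 = ud/ur :=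
      max_eq_left ((one_le_div hur0).mpr (truncMin_mono _ hρle))
    have hstep5 : ud/ur ≤ dist w z / ρ := truncMin_ratio_le hA₀ hρ0 hρle
    have hmaxb : max (ud^2/(ur*uz)) 1 ≤
        max (dist w z / deltaD D z) 1 * (dist w z / ρ) := by
      rw [hsplit]
      calc max ((ud/uz) * (ud/ur)) 1 ≤ max (ud/uz) 1 * max (ud/ur) 1 := hstep2
        _ ≤ max (dist w z / deltaD D z) 1 * (dist w z / ρ) := by
            apply mul_le_mul hstep3 (le_trans (le_of_eq hstep4) hstep5)
              (le_trans zero_le_one (le_max_right _ _))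
              (le_trans zero_le_one (le_max_right _ _))
    have hmaxr : (max (ud^2/(ur*uz)) 1) ^ β₁ ≤
        (max (dist w z / deltaD D z) 1) ^ β₁ * (dist w z / ρ) ^ β₁ := by
      rw [← Real.mul_rpow (le_trans zero_le_one (le_max_right _ _)) (by positivity)]
      apply Real.rpow_le_rpow (le_trans zero_le_one (le_max_right _ _)) hmaxb hβ₁
    have hmax2 : (max (dist w z / deltaD D z) 1) ^ β₁ ≤
        (max 1 (((2:ℝ)^(n+1) * ρ) / deltaD D z)) ^ β₁ := by
      apply Real.rpow_le_rpow (le_trans zero_le_one (le_max_right _ _)) _ hβ₁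
      apply max_le _ (le_max_left _ _)
      exact le_trans ((div_le_div_iff_of_pos_right hδz).mpr hzu.le) (le_max_right _ _)
    have hpowb : dist w z ^ (-((d:ℝ)+α)) * (dist w z / ρ) ^ β₁ ≤
        ((2:ℝ)^n * ρ) ^ (β₁ - (d:ℝ) - α) * ρ ^ (-β₁) := by
      have e1 : (dist w z / ρ) ^ β₁ = dist w z ^ β₁ * ρ ^ (-β₁) := by
        rw [Real.div_rpow hdwz0.le hρ0.le, Real.rpow_neg hρ0.le, div_eq_mul_inv]
      have e2 : dist w z ^ (-((d:ℝ)+α)) * dist w z ^ β₁ =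
          dist w z ^ (β₁ - (d:ℝ) - α) := by
        rw [← Real.rpow_add hdwz0]
        congr 1
        ring
      have e3 : dist w z ^ (β₁ - (d:ℝ) - α) ≤ ((2:ℝ)^n * ρ) ^ (β₁ - (d:ℝ) - α) :=
        Real.rpow_le_rpow_of_nonpos hLn0 hzl (by linarith)
      calc dist w z ^ (-((d:ℝ)+α)) * (dist w z / ρ) ^ β₁
          = dist w z ^ (β₁ - (d:ℝ) - α) * ρ ^ (-β₁) := by rw [e1, ← mul_assoc, e2]
        _ ≤ ((2:ℝ)^n * ρ) ^ (β₁ - (d:ℝ) - α) * ρ ^ (-β₁) :=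
            mul_le_mul_of_nonneg_right e3 (by positivity)
    have hJfinal : J w z ≤ (C₁ * C_Φ * Φb *
        (ρ ^ (-β₁) * ((2:ℝ)^n * ρ) ^ (β₁ - (d:ℝ) - α))) *
        (max 1 (((2:ℝ)^(n+1) * ρ) / deltaD D z)) ^ β₁ := by
      calc J w z ≤ C₁ * (dist w z ^ (-((d:ℝ)+α)) * Φ (ud^2/(uw*uz))) := hJu
        _ ≤ C₁ * (dist w z ^ (-((d:ℝ)+α)) *
            (C_Φ * ((max (dist w z / deltaD D z) 1) ^ β₁ * (dist w z / ρ) ^ β₁) * Φb)) := by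
            apply mul_le_mul_of_nonneg_left _ hC₁0
            apply mul_le_mul_of_nonneg_left _ (by positivity)
            calc Φ (ud^2/(uw*uz)) ≤ C_Φ * (max (ud^2/(ur*uz)) 1) ^ β₁ * Φb := hΦarg
              _ ≤ C_Φ * ((max (dist w z / deltaD D z) 1) ^ β₁ * (dist w z / ρ) ^ β₁) * Φb := by
                  apply mul_le_mul_of_nonneg_right _ hΦb0
                  exact mul_le_mul_of_nonneg_left hmaxr (by linarith)
        _ = (C₁ * C_Φ * Φb) * ((dist w z ^ (-((d:ℝ)+α)) * (dist w z / ρ) ^ β₁) *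
            (max (dist w z / deltaD D z) 1) ^ β₁) := by ring
        _ ≤ (C₁ * C_Φ * Φb) * ((((2:ℝ)^n * ρ) ^ (β₁ - (d:ℝ) - α) * ρ ^ (-β₁)) *
            (max 1 (((2:ℝ)^(n+1) * ρ) / deltaD D z)) ^ β₁) := by
            apply mul_le_mul_of_nonneg_left _
              (mul_nonneg (mul_nonneg hC₁0 (by linarith)) hΦb0)
            apply mul_le_mul hpowb hmax2 (by positivity) (by positivity)
        _ = (C₁ * C_Φ * Φb * (ρ ^ (-β₁) * ((2:ℝ)^n * ρ) ^ (β₁ - (d:ℝ) - α))) *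
            (max 1 (((2:ℝ)^(n+1) * ρ) / deltaD D z)) ^ β₁ := by ring
    have hmin0 : (0:ℝ) ≤ (min 1 (τ / dist x z)) ^ lam :=
      Real.rpow_nonneg (le_min zero_le_one (by positivity)) _
    calc t ^ (-(d:ℝ)/α) * (min 1 (τ / dist x z)) ^ lam * J w z
        ≤ t ^ (-(d:ℝ)/α) * (min 1 (τ / dist x z)) ^ lam *
          ((C₁ * C_Φ * Φb * (ρ ^ (-β₁) * ((2:ℝ)^n * ρ) ^ (β₁ - (d:ℝ) - α))) *
          (max 1 (((2:ℝ)^(n+1) * ρ) / deltaD D z)) ^ β₁) := by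
          apply mul_le_mul_of_nonneg_left hJfinal
          exact mul_nonneg (by positivity) hmin0
      _ = _ := by ring
  -- per-shell integral bound
  set c'' : ℝ := (C₁ * C_Φ * C₂ * e₂ * (t ^ (-(d:ℝ)/α) * τ ^ lam *
      (ρ ^ (-β₁) * ρ ^ (β₁ - (d:ℝ) - α) * ρ ^ ((d:ℝ) - lam)))) * Φb with hc''def
  have hc''0 : 0 ≤ c'' := by
    apply mul_nonneg _ hΦb0
    apply mul_nonneg _ (by positivity)
    apply mul_nonneg (mul_nonneg (mul_nonneg hC₁0 (by linarith)) (by linarith)) he₂0.le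
  have hshell : ∀ n : ℕ, (∫⁻ z in Sh n,
      ENNReal.ofReal (t ^ (-(d:ℝ)/α) * (min 1 (τ / dist x z)) ^ lam * J w z)) ≤
      ENNReal.ofReal (c'' * q₃ ^ n) := by
    intro n
    set Rn : ℝ := (2:ℝ)^(n+1) * ρ with hRndef
    have hRn0 : 0 < Rn := by positivity
    have hτRn : τ ≤ Rn := by
      have h1 : ρ ≤ Rn := le_mul_of_one_le_left hρ0.le (one_le_pow₀ (by norm_num))
      linarith
    set Gn : ℝ := t ^ (-(d:ℝ)/α) * (C₁ * C_Φ * Φb *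
        (ρ ^ (-β₁) * ((2:ℝ)^n * ρ) ^ (β₁ - (d:ℝ) - α))) with hGndef
    have hGn0 : 0 ≤ Gn := by
      apply mul_nonneg (by positivity)
      apply mul_nonneg (mul_nonneg (mul_nonneg hC₁0 (by linarith)) hΦb0) (by positivity)
    have hsub : Sh n ⊆ ball w Rn := by
      intro z hz
      rw [mem_ball, dist_comm]
      exact hz.2.2
    calc (∫⁻ z in Sh n,
        ENNReal.ofReal (t ^ (-(d:ℝ)/α) * (min 1 (τ / dist x z)) ^ lam * J w z))
        ≤ ∫⁻ z in Sh n, ENNReal.ofReal (Gn * ((min 1 (τ / dist x z)) ^ lam *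
            (max 1 (Rn / deltaD D z)) ^ β₁)) :=
          setLIntegral_mono' (hShmeas n)
            (fun z hz => ENNReal.ofReal_le_ofReal (key n z hz))
      _ = ENNReal.ofReal Gn * ∫⁻ z in Sh n, ENNReal.ofReal ((min 1 (τ / dist x z)) ^ lam *
            (max 1 (Rn / deltaD D z)) ^ β₁) := by
          rw [← lintegral_const_mul' _ _ ENNReal.ofReal_ne_top]
          congr 1
          ext z
          rw [← ENNReal.ofReal_mul hGn0]
      _ ≤ ENNReal.ofReal Gn * ∫⁻ z in ball w Rn,
            ENNReal.ofReal ((min 1 (τ / dist x z)) ^ lam *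
            (max 1 (Rn / deltaD D z)) ^ β₁) :=
          mul_le_mul_right (lintegral_mono_set hsub) _
      _ ≤ ENNReal.ofReal Gn * ENNReal.ofReal (C₂ * τ ^ lam * Rn ^ ((d:ℝ) - lam)) := by
          apply mul_le_mul_right
          have h := hC₂ w x τ Rn hτ0 hτRn
          simpa only [deltaD] using h
      _ = ENNReal.ofReal (Gn * (C₂ * τ ^ lam * Rn ^ ((d:ℝ) - lam))) := by
          rw [← ENNReal.ofReal_mul hGn0]
      _ ≤ ENNReal.ofReal (c'' * q₃ ^ n) := by
          apply ENNReal.ofReal_le_ofReal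
          apply le_of_eq
          have eRn : Rn ^ ((d:ℝ) - lam) = e₂^(n+1) * ρ ^ ((d:ℝ) - lam) := by
            rw [hRndef, Real.mul_rpow (by positivity) hρ0.le, he₂def,
              pow_rpow_comm (by norm_num) ((d:ℝ) - lam) (n+1)]
          have eLn : ((2:ℝ)^n * ρ) ^ (β₁ - (d:ℝ) - α) =
              e₁^n * ρ ^ (β₁ - (d:ℝ) - α) := by
            rw [Real.mul_rpow (by positivity) hρ0.le, he₁def,
              pow_rpow_comm (by norm_num) (β₁ - (d:ℝ) - α) n]
          rw [hGndef, eRn, eLn, hc''def, hq₃def, mul_pow]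
          ring
  calc (∫⁻ z in D \ ball w ρ,
      ENNReal.ofReal (t ^ (-(d:ℝ)/α) * (min 1 (τ / dist x z)) ^ lam * J w z))
      ≤ ∫⁻ z in ⋃ n, Sh n,
        ENNReal.ofReal (t ^ (-(d:ℝ)/α) * (min 1 (τ / dist x z)) ^ lam * J w z) :=
        lintegral_mono_set hcover
    _ ≤ ∑' n, ∫⁻ z in Sh n,
        ENNReal.ofReal (t ^ (-(d:ℝ)/α) * (min 1 (τ / dist x z)) ^ lam * J w z) :=
        lintegral_iUnion_le _ _
    _ ≤ ∑' n, ENNReal.ofReal (c'' * q₃ ^ n) := ENNReal.tsum_le_tsum hshell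
    _ ≤ ENNReal.ofReal (c'' * (1 - q₃)⁻¹) :=
        tsum_ofReal_geometric_le _ _ hc''0 hq₃0.le hq₃1
    _ ≤ ENNReal.ofReal (C₁ * C_Φ * C₂ * e₂ * (1 - q₃)⁻¹ * t ^ ((lam - (d:ℝ))/α) *
        ρ ^ (-(lam + α)) * Φb) := by
        apply ENNReal.ofReal_le_ofReal
        apply le_of_eq
        have hαne : α ≠ 0 := hα0.ne'
        have et : t ^ (-(d:ℝ)/α) * τ ^ lam = t ^ ((lam - (d:ℝ))/α) := by
          rw [hτdef, ← Real.rpow_mul ht.le, ← Real.rpow_add ht]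
          congr 1
          field_simp
          ring
        have eρ : ρ ^ (-β₁) * ρ ^ (β₁ - (d:ℝ) - α) * ρ ^ ((d:ℝ) - lam) =
            ρ ^ (-(lam + α)) := by
          rw [← Real.rpow_add hρ0, ← Real.rpow_add hρ0]
          congr 1
          ring
        rw [hc''def, ← et, ← eρ]
        ring
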